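/- arXiv:2405.11669 — 2 statements merged into one kernel-verified Lean document; each statement's English description precedes it below -/
import Mathlib

section
/- With S, T, g, γ ∈ [0,1), λ ∈ [0,1) as given, let M V denote the unique bounded fixed point of the operator W ↦ (s ↦ max(g(s), γ(λ W(T s) + (1-λ) V(T s)))). Then the map V ↦ M V is a contraction on bounded functions with sup norm: ‖M V₁ - M V₂‖∞ ≤ η ‖V₁ - V₂‖∞ where η = γ(1-λ)/(1-λγ) < 1. -/
/-!
Write `d s = |W₁ s - W₂ s|`. Since `max (g s) ·` is 1-Lipschitz, the fixed-point equations give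
`d s ≤ γλ · d (T s) + γ(1-λ) · C`. Taking the supremum `D` of the bounded function `d` yields
`D ≤ γλ D + γ(1-λ) C`, i.e. `D ≤ γ(1-λ) C / (1-λγ)`.
-/

lemma abs_max_mixture_sub_le {g γ lam x₁ x₂ y₁ y₂ : ℝ} (hγ0 : 0 ≤ γ) (hl0 : 0 ≤ lam)
    (hl1 : lam ≤ 1) :
    |max g (γ * (lam * x₁ + (1 - lam) * y₁)) - max g (γ * (lam * x₂ + (1 - lam) * y₂))| ≤
      lam * γ * |x₁ - x₂| + γ * (1 - lam) * |y₁ - y₂| := by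
  have hmix : γ * (lam * x₁ + (1 - lam) * y₁) - γ * (lam * x₂ + (1 - lam) * y₂) =
      lam * γ * (x₁ - x₂) + γ * (1 - lam) * (y₁ - y₂) := by ring
  calc _ ≤ |γ * (lam * x₁ + (1 - lam) * y₁) - γ * (lam * x₂ + (1 - lam) * y₂)| := by
        rw [max_comm g, max_comm g]
        exact abs_max_sub_max_le_abs _ _ _
    _ ≤ |lam * γ * (x₁ - x₂)| + |γ * (1 - lam) * (y₁ - y₂)| := hmix ▸ abs_add_le _ _
    _ = lam * γ * |x₁ - x₂| + γ * (1 - lam) * |y₁ - y₂| := by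
        simp only [abs_mul, abs_of_nonneg hl0, abs_of_nonneg hγ0,
          abs_of_nonneg (sub_nonneg.2 hl1)]

lemma le_div_one_sub_of_le_mul_comp_add {S : Type*} {T : S → S} {f : S → ℝ} {a c : ℝ}
    (hf : BddAbove (Set.range f)) (ha0 : 0 ≤ a) (ha1 : a < 1)
    (h : ∀ s, f s ≤ a * f (T s) + c) (s : S) : f s ≤ c / (1 - a) := by
  have : Nonempty S := ⟨s⟩
  have hsup : ⨆ t, f t ≤ a * (⨆ t, f t) + c :=
    ciSup_le fun t => (h t).trans (by gcongr; exact le_ciSup hf (T t))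
  rw [le_div_iff₀ (by linarith)]
  nlinarith [mul_le_mul_of_nonneg_left (le_ciSup hf s) (sub_nonneg.2 ha1.le)]

lemma bddAbove_range_abs_sub {S : Type*} {W₁ W₂ : S → ℝ}
    (hW₁ : ∃ C, ∀ s, |W₁ s| ≤ C) (hW₂ : ∃ C, ∀ s, |W₂ s| ≤ C) :
    BddAbove (Set.range fun s => |W₁ s - W₂ s|) := by
  obtain ⟨K₁, hK₁⟩ := hW₁
  obtain ⟨K₂, hK₂⟩ := hW₂
  exact ⟨K₁ + K₂, Set.forall_mem_range.2 fun s =>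
    (abs_sub _ _).trans (add_le_add (hK₁ s) (hK₂ s))⟩

theorem M_operator_contraction_general {S : Type*} (T : S → S)
    (g V₁ V₂ W₁ W₂ : S → ℝ)
    (hW₁ : ∃ C, ∀ s, |W₁ s| ≤ C) (hW₂ : ∃ C, ∀ s, |W₂ s| ≤ C)
    (γ lam : ℝ) (hγ0 : 0 ≤ γ) (hγ1 : γ < 1) (hl0 : 0 ≤ lam) (hl1 : lam < 1)
    (hfix₁ : ∀ s, W₁ s = max (g s) (γ * (lam * W₁ (T s) + (1 - lam) * V₁ (T s))))
    (hfix₂ : ∀ s, W₂ s = max (g s) (γ * (lam * W₂ (T s) + (1 - lam) * V₂ (T s)))) :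
    γ * (1 - lam) / (1 - lam * γ) < 1 ∧
    ∀ C : ℝ, (∀ s, |V₁ s - V₂ s| ≤ C) →
      ∀ s, |W₁ s - W₂ s| ≤ γ * (1 - lam) / (1 - lam * γ) * C := by
  have hlγ : lam * γ < 1 := by nlinarith
  refine ⟨(div_lt_one (by linarith)).2 (by nlinarith), fun C hC s => ?_⟩
  have hstep : ∀ t, |W₁ t - W₂ t| ≤ lam * γ * |W₁ (T t) - W₂ (T t)| + γ * (1 - lam) * C := by
    intro t
    rw [hfix₁ t, hfix₂ t]
    refine (abs_max_mixture_sub_le hγ0 hl0 hl1.le).trans ?_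
    have hV := mul_le_mul_of_nonneg_left (hC (T t)) (mul_nonneg hγ0 (sub_nonneg.2 hl1.le))
    linarith
  rw [div_mul_eq_mul_div]
  exact le_div_one_sub_of_le_mul_comp_add (bddAbove_range_abs_sub hW₁ hW₂) (by positivity) hlγ
    hstep s

theorem M_operator_contraction {S : Type*} [Nonempty S] (T : S → S)
    (g V₁ V₂ W₁ W₂ : S → ℝ)
    (hg : ∃ C, ∀ s, |g s| ≤ C)
    (hV₁ : ∃ C, ∀ s, |V₁ s| ≤ C) (hV₂ : ∃ C, ∀ s, |V₂ s| ≤ C)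
    (hW₁ : ∃ C, ∀ s, |W₁ s| ≤ C) (hW₂ : ∃ C, ∀ s, |W₂ s| ≤ C)
    (γ lam : ℝ) (hγ0 : 0 ≤ γ) (hγ1 : γ < 1) (hl0 : 0 ≤ lam) (hl1 : lam < 1)
    (hfix₁ : ∀ s, W₁ s = max (g s) (γ * (lam * W₁ (T s) + (1 - lam) * V₁ (T s))))
    (hfix₂ : ∀ s, W₂ s = max (g s) (γ * (lam * W₂ (T s) + (1 - lam) * V₂ (T s)))) :
    γ * (1 - lam) / (1 - lam * γ) < 1 ∧
    ∀ C : ℝ, (∀ s, |V₁ s - V₂ s| ≤ C) →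
      ∀ s, |W₁ s - W₂ s| ≤ γ * (1 - lam) / (1 - lam * γ) * C :=
  M_operator_contraction_general T g V₁ V₂ W₁ W₂ hW₁ hW₂ γ lam hγ0 hγ1 hl0 hl1 hfix₁ hfix₂
end

section
/- Let T : S → S, g : S → ℝ bounded, γ ∈ [0,1), λ ∈ [0,1), and let V(s) = sup_{τ≥0} γ^τ g(T^τ s). If W is a bounded function satisfying W(s) = max(g(s), γ(λ W(T s) + (1-λ) V(T s))) for all s, then W = V. -/
theorem fixed_point_is_value_function {S : Type*} [Nonempty S] (T : S → S) (g : S → ℝ)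
    (hg : ∃ C, ∀ s, |g s| ≤ C) (γ lam : ℝ)
    (hγ0 : 0 ≤ γ) (hγ1 : γ < 1) (hl0 : 0 ≤ lam) (hl1 : lam < 1)
    (W : S → ℝ) (hW : ∃ C, ∀ s, |W s| ≤ C)
    (hfix : ∀ s, W s = max (g s)
      (γ * (lam * W (T s) + (1 - lam) * (⨆ τ : ℕ, γ ^ τ * g (T^[τ] (T s)))))) :
    ∀ s, W s = ⨆ τ : ℕ, γ ^ τ * g (T^[τ] s) := by
  obtain ⟨C, hC⟩ := hg
  obtain ⟨D, hD⟩ := hW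
  set V : S → ℝ := fun s => ⨆ τ : ℕ, γ ^ τ * g (T^[τ] s) with hVdef
  have hterm : ∀ (s : S) (τ : ℕ), |γ ^ τ * g (T^[τ] s)| ≤ C := by
    intro s τ
    rw [abs_mul]
    calc |γ ^ τ| * |g (T^[τ] s)| ≤ 1 * C := by
          apply mul_le_mul _ (hC _) (abs_nonneg _) zero_le_one
          rw [abs_pow, abs_of_nonneg hγ0]
          exact pow_le_one₀ hγ0 hγ1.le
      _ = C := one_mul C
  have hbdd : ∀ s : S, BddAbove (Set.range fun τ : ℕ => γ ^ τ * g (T^[τ] s)) := by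
    intro s
    exact ⟨C, by rintro x ⟨τ, rfl⟩; exact (abs_le.mp (hterm s τ)).2⟩
  have hVle : ∀ s, |V s| ≤ C := by
    intro s
    rw [abs_le]
    constructor
    · calc -C ≤ γ ^ 0 * g (T^[0] s) := by simpa using (abs_le.mp (hC s)).1
        _ ≤ V s := le_ciSup (hbdd s) 0
    · exact ciSup_le fun τ => (abs_le.mp (hterm s τ)).2
  have hVfix : ∀ s, V s = max (g s) (γ * V (T s)) := by
    intro s
    apply le_antisymm
    · apply ciSup_le
      intro τ
      cases τ with
      | zero => simpa using le_max_left (g s) (γ * V (T s))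
      | succ n =>
        refine le_trans ?_ (le_max_right _ _)
        have h1 : γ ^ (n + 1) * g (T^[n + 1] s) = γ * (γ ^ n * g (T^[n] (T s))) := by
          rw [pow_succ, Function.iterate_succ_apply]
          ring
        rw [h1]
        exact mul_le_mul_of_nonneg_left (le_ciSup (hbdd (T s)) n) hγ0
    · apply max_le
      · simpa using le_ciSup (hbdd s) 0
      · rw [hVdef]
        simp only
        rw [Real.mul_iSup_of_nonneg hγ0]
        apply ciSup_le
        intro n
        have h1 : γ * (γ ^ n * g (T^[n] (T s))) = γ ^ (n + 1) * g (T^[n + 1] s) := by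
          rw [pow_succ, Function.iterate_succ_apply]
          ring
        rw [h1]
        exact le_ciSup (hbdd s) (n + 1)
  have hγl0 : 0 ≤ γ * lam := mul_nonneg hγ0 hl0
  have hγl1 : γ * lam < 1 :=
    lt_of_le_of_lt (mul_le_of_le_one_right hγ0 hl1.le) hγ1
  have key : ∀ (n : ℕ) (s : S), |W s - V s| ≤ (γ * lam) ^ n * (D + C) := by
    intro n
    induction n with
    | zero =>
      intro s
      simpa using (abs_sub _ _).trans (add_le_add (hD s) (hVle s))
    | succ n ih =>
      intro s
      have h2 : |W s - V s| ≤ γ * lam * |W (T s) - V (T s)| := by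
        rw [hfix s, hVfix s, max_comm (g s) _, max_comm (g s) _]
        calc |max (γ * (lam * W (T s) + (1 - lam) * V (T s))) (g s) -
                max (γ * V (T s)) (g s)|
            ≤ |γ * (lam * W (T s) + (1 - lam) * V (T s)) - γ * V (T s)| :=
              abs_max_sub_max_le_abs _ _ _
          _ = γ * lam * |W (T s) - V (T s)| := by
              rw [show γ * (lam * W (T s) + (1 - lam) * V (T s)) - γ * V (T s) =
                γ * lam * (W (T s) - V (T s)) by ring, abs_mul,
                abs_of_nonneg hγl0]
      calc |W s - V s| ≤ γ * lam * |W (T s) - V (T s)| := h2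
        _ ≤ γ * lam * ((γ * lam) ^ n * (D + C)) :=
            mul_le_mul_of_nonneg_left (ih (T s)) hγl0
        _ = (γ * lam) ^ (n + 1) * (D + C) := by ring
  intro s
  have h0 : |W s - V s| ≤ 0 := by
    have htend : Filter.Tendsto (fun n : ℕ => (γ * lam) ^ n * (D + C))
        Filter.atTop (nhds 0) := by
      simpa using (tendsto_pow_atTop_nhds_zero_of_lt_one hγl0 hγl1).mul_const (D + C)
    exact ge_of_tendsto' htend fun n => key n s
  have := abs_nonpos_iff.mp h0
  linarith [sub_eq_zero.mp this]
end
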